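/- Let f belong to (an equivalence class in) L^p(P̃_X) for some p ≥ 1, and let h be a linear game value whose coefficients w_i(S,N) are nonnegative and satisfy Σ_{S⊆N∖{i}} w_i(S,N) = 1. Then for P_X-almost every x* ∈ ℝ^n and every i ∈ N, the map (S,x) ↦ Δ_i(S,x; x*,f) := f(x*_{S∪{i}}, x_{-(S∪{i})}) − f(x*_S, x_{-S}) is measurable with respect to the product measure P_i^{(h)} ⊗ P_X and is p-power integrable with ∫ |Δ_i(S,x; x*,f)|^p [P_i^{(h)} ⊗ P_X](dS, dx) ≤ 2^p · (max_{S⊆N∖{i}} w_i(S,N)) · ν_{x*}^{(p)}(f), where ν_{x*}^{(p)}(f) := Σ_{S⊆N} ∫ |f(x*_S, x_{-S})|^p P_{X_{-S}}(dx_{-S}). -/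

import Mathlib

/-!
`P̃_X` dominates each `P_{X_S} ⊗ P_{X_{-S}}` up to the factor `2^n`, and the latter is the image
of `P_X ⊗ P_X` under `(y, x) ↦ (y_S, x_{-S})`; so by Fubini, for `P_X`-a.e. `x*` every section
`x ↦ f(x*_S, x_{-S})` lies in `L^p(P_X)`. The measure `P_i^{(h)} ⊗ P_X` is the finite combination
`∑_T w(T) δ_T ⊗ P_X`, so everything reduces to these sections, to
`|a - b|^p ≤ 2^p (|a|^p + |b|^p)`, and to the fact that `T` and `T ∪ {i}`, for `T ⊆ N∖{i}`,
together run through every subset of `N` exactly once.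
-/

open MeasureTheory ProbabilityTheory ENNReal Filter Finset

noncomputable section

/-- Discrete σ-algebra on the (finite) space of coalitions. -/
instance {k : ℕ} : MeasurableSpace (Finset (Fin k)) := ⊤

/-- `merge n S y x` is the vector in `ℝ^n` agreeing with `y` on `S` and with `x` on `N∖S`,
i.e. the vector `(y_S, x_{-S})`. -/
def merge (n : ℕ) (S : Finset (Fin n)) (y x : Fin n → ℝ) : Fin n → ℝ :=
  fun i => if i ∈ S then y i else x i

/-- The product measure `P_{X_S} ⊗ P_{X_{-S}}` viewed as a measure on `ℝ^n`
(obtained by merging two independent copies along `S`). -/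
def prodPart (n : ℕ) (P : Measure (Fin n → ℝ)) (S : Finset (Fin n)) :
    Measure (Fin n → ℝ) :=
  (P.prod P).map (fun q => merge n S q.1 q.2)

/-- The mixture measure `P̃_X = 2^{-n} ∑_{S ⊆ N} P_{X_S} ⊗ P_{X_{-S}}` on `ℝ^n`. -/
def tildeP (n : ℕ) (P : Measure (Fin n → ℝ)) : Measure (Fin n → ℝ) :=
  ((2 : ℝ≥0∞) ^ n)⁻¹ • ∑ S : Finset (Fin n), prodPart n P S

/-- The marginal game `v^{ME}(S; x*, X, f) = E[f(x*_S, X_{-S})]`. -/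
def vME (n : ℕ) (P : Measure (Fin n → ℝ)) (f : (Fin n → ℝ) → ℝ)
    (xs : Fin n → ℝ) (S : Finset (Fin n)) : ℝ :=
  ∫ x, f (merge n S xs x) ∂P

/-- A linear game value `h_i[N,v] = ∑_{S ⊆ N∖{i}} w(S) (v(S∪{i}) - v(S))`. -/
def gameValue (n : ℕ) (w : Finset (Fin n) → ℝ) (i : Fin n)
    (v : Finset (Fin n) → ℝ) : ℝ :=
  ∑ S ∈ (univ.erase i).powerset, w S * (v (insert i S) - v S)

/-- The discrete measure on subsets of `D` assigning mass `w T` to each `T ⊆ D`.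
For `D = N∖{i}` and nonnegative weights summing to one this is `P_i^{(h)}`. -/
def subsetMeasure (k : ℕ) (D : Finset (Fin k)) (w : Finset (Fin k) → ℝ) :
    Measure (Finset (Fin k)) :=
  ∑ T ∈ D.powerset, (ENNReal.ofReal (w T)) • Measure.dirac T

/-- `Δ_i(S, x; x*, f) = f(x*_{S∪{i}}, x_{-(S∪{i})}) - f(x*_S, x_{-S})`. -/
def deltaFun (n : ℕ) (f : (Fin n → ℝ) → ℝ) (i : Fin n) (xs : Fin n → ℝ) :
    Finset (Fin n) × (Fin n → ℝ) → ℝ :=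
  fun q => f (merge n (insert i q.1) xs q.2) - f (merge n q.1 xs q.2)

instance {k : ℕ} : MeasurableSingletonClass (Finset (Fin k)) := ⟨fun _ => trivial⟩

theorem MeasureTheory.MemLp.ae_memLp_prodMk {α β E : Type*} [MeasurableSpace α]
    [MeasurableSpace β] [NormedAddCommGroup E] {μ : Measure α} {ν : Measure β} [SFinite μ]
    [SFinite ν] {q : ℝ≥0∞} {F : α × β → E} (hF : MemLp F q (μ.prod ν)) (hq0 : q ≠ 0)
    (hq : q ≠ ∞) : ∀ᵐ x ∂μ, MemLp (fun y => F (x, y)) q ν := by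
  filter_upwards [hF.1.prodMk_left, (hF.integrable_norm_rpow hq0 hq).prod_right_ae]
    with x hmeas hint
  exact (integrable_norm_rpow_iff hmeas hq0 hq).1 hint

theorem MeasureTheory.MemLp.integrable_abs_rpow {α : Type*} [MeasurableSpace α]
    {μ : Measure α} {g : α → ℝ} {p : ℝ} (hp : 0 < p) (hg : MemLp g (ENNReal.ofReal p) μ) :
    Integrable (fun x => |g x| ^ p) μ := by
  simpa [ENNReal.toReal_ofReal hp.le] using
    hg.integrable_norm_rpow (by simpa using hp) ENNReal.ofReal_ne_top

section FinsetSumDiracProd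

variable {α β : Type*} [MeasurableSpace α] [MeasurableSingletonClass α] [MeasurableSpace β]
  {ν : Measure β} [SFinite ν] (s : Finset α) (c : α → ℝ≥0∞)

theorem MeasureTheory.Measure.finsetSum_dirac_prod :
    (∑ a ∈ s, c a • Measure.dirac a).prod ν = ∑ a ∈ s, c a • ν.map (Prod.mk a) := by
  ext t ht
  rw [Measure.prod_apply ht, lintegral_finsetSum_measure, Measure.finsetSum_apply]
  refine Finset.sum_congr rfl fun a _ => ?_
  rw [lintegral_smul_measure, lintegral_dirac, Measure.smul_apply,
    Measure.map_apply measurable_prodMk_left ht, smul_eq_mul]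

theorem aemeasurable_finsetSum_dirac_prod [Countable α] {γ : Type*} [MeasurableSpace γ]
    {F : α × β → γ} (hF : ∀ a, AEMeasurable (fun b => F (a, b)) ν) :
    AEMeasurable F ((∑ a ∈ s, c a • Measure.dirac a).prod ν) := by
  refine ⟨fun q => (hF q.1).mk _ q.2,
    measurable_from_prod_countable_right fun a => (hF a).measurable_mk, ?_⟩
  rw [Measure.finsetSum_dirac_prod, EventuallyEq, ae_finsetSum_measure_iff]
  intro a _
  refine Measure.ae_smul_measure ?_ _
  rw [(measurableEmbedding_prodMk_left a).ae_map_iff]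
  exact (hF a).ae_eq_mk

variable {E : Type*} [NormedAddCommGroup E]

theorem integrable_finsetSum_dirac_prod (hc : ∀ a ∈ s, c a ≠ ∞) {F : α × β → E}
    (hF : ∀ a ∈ s, Integrable (fun b => F (a, b)) ν) :
    Integrable F ((∑ a ∈ s, c a • Measure.dirac a).prod ν) := by
  rw [Measure.finsetSum_dirac_prod, integrable_finsetSum_measure]
  exact fun a ha =>
    ((measurableEmbedding_prodMk_left a).integrable_map_iff.2 (hF a ha)).smul_measure (hc a ha)

theorem integral_finsetSum_dirac_prod [NormedSpace ℝ E] (hc : ∀ a ∈ s, c a ≠ ∞)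
    {F : α × β → E} (hF : ∀ a ∈ s, Integrable (fun b => F (a, b)) ν) :
    ∫ q, F q ∂(∑ a ∈ s, c a • Measure.dirac a).prod ν
      = ∑ a ∈ s, (c a).toReal • ∫ b, F (a, b) ∂ν := by
  have hint := integrable_finsetSum_dirac_prod s c hc hF
  rw [Measure.finsetSum_dirac_prod] at hint ⊢
  rw [integral_finsetSum_measure (integrable_finsetSum_measure.1 hint)]
  simp_rw [integral_smul_measure, (measurableEmbedding_prodMk_left _).integral_map]

end FinsetSumDiracProd

theorem measurable_merge (n : ℕ) (S : Finset (Fin n)) :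
    Measurable fun q : (Fin n → ℝ) × (Fin n → ℝ) => merge n S q.1 q.2 := by
  refine measurable_pi_lambda _ fun j => ?_
  by_cases hj : j ∈ S <;> simp only [merge, hj, if_true, if_false] <;> fun_prop

section Merge

variable {n : ℕ} {P : Measure (Fin n → ℝ)}

theorem prodPart_le_tildeP (S : Finset (Fin n)) :
    prodPart n P S ≤ (2 ^ n : ℝ≥0∞) • tildeP n P := by
  rw [tildeP, smul_smul, ENNReal.mul_inv_cancel (by positivity) (by simp), one_smul]
  exact Finset.single_le_sum (f := prodPart n P) (fun _ _ => Measure.zero_le _) (mem_univ S)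

variable {E : Type*} [NormedAddCommGroup E] {q : ℝ≥0∞} {f : (Fin n → ℝ) → E}

theorem MeasureTheory.MemLp.comp_merge (hf : MemLp f q (tildeP n P)) (S : Finset (Fin n)) :
    MemLp (fun z : (Fin n → ℝ) × (Fin n → ℝ) => f (merge n S z.1 z.2)) q (P.prod P) :=
  ((hf.smul_measure (by simp)).mono_measure (prodPart_le_tildeP S)).comp_of_map
    (measurable_merge n S).aemeasurable

theorem MeasureTheory.MemLp.ae_forall_memLp_merge [SFinite P] (hf : MemLp f q (tildeP n P))
    (hq0 : q ≠ 0) (hq : q ≠ ∞) :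
    ∀ᵐ xs ∂P, ∀ S : Finset (Fin n), MemLp (fun x => f (merge n S xs x)) q P :=
  ae_all_iff.2 fun S => (hf.comp_merge S).ae_memLp_prodMk hq0 hq

end Merge

theorem abs_sub_rpow_le {p : ℝ} (hp : 0 ≤ p) (a b : ℝ) :
    |a - b| ^ p ≤ 2 ^ p * (|a| ^ p + |b| ^ p) := by
  calc |a - b| ^ p ≤ (2 * max |a| |b|) ^ p := by
        gcongr
        calc |a - b| ≤ |a| + |b| := abs_sub _ _
          _ ≤ 2 * max |a| |b| := by linarith [le_max_left |a| |b|, le_max_right |a| |b|]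
    _ = 2 ^ p * max |a| |b| ^ p := Real.mul_rpow zero_le_two (le_max_of_le_left (abs_nonneg a))
    _ ≤ 2 ^ p * (|a| ^ p + |b| ^ p) := by
        gcongr
        rcases max_cases |a| |b| with ⟨h, _⟩ | ⟨h, _⟩ <;> rw [h]
        · exact le_add_of_nonneg_right (by positivity)
        · exact le_add_of_nonneg_left (by positivity)

theorem integral_abs_sub_rpow_le {α : Type*} [MeasurableSpace α] {μ : Measure α} {p : ℝ}
    (hp : 0 ≤ p) {a b : α → ℝ} (ha : Integrable (fun x => |a x| ^ p) μ)
    (hb : Integrable (fun x => |b x| ^ p) μ) :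
    ∫ x, |a x - b x| ^ p ∂μ ≤ 2 ^ p * (∫ x, |a x| ^ p ∂μ + ∫ x, |b x| ^ p ∂μ) := by
  rw [← integral_add ha hb, ← integral_const_mul]
  exact integral_mono_of_nonneg (.of_forall fun x => by positivity) ((ha.add hb).const_mul _)
    (.of_forall fun x => abs_sub_rpow_le hp (a x) (b x))

theorem Finset.sum_mul_le_sup'_mul_sum {ι : Type*} {s : Finset ι} (hs : s.Nonempty)
    (w a : ι → ℝ) (ha : ∀ i ∈ s, 0 ≤ a i) :
    ∑ i ∈ s, w i * a i ≤ s.sup' hs w * ∑ i ∈ s, a i := by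
  rw [mul_sum]
  exact sum_le_sum fun i hi => mul_le_mul_of_nonneg_right (le_sup' w hi) (ha i hi)

theorem Finset.sum_powerset_erase_insert_add {α M : Type*} [Fintype α] [DecidableEq α]
    [AddCommMonoid M] (i : α) (A : Finset α → M) :
    ∑ T ∈ (univ.erase i).powerset, (A (insert i T) + A T) = ∑ S, A S := by
  rw [sum_add_distrib, add_comm, ← sum_powerset_insert (notMem_erase i univ),
    insert_erase (mem_univ i), powerset_univ]

section DeltaFun

variable {n : ℕ} {P : Measure (Fin n → ℝ)} {p : ℝ} {f : (Fin n → ℝ) → ℝ} {xs : Fin n → ℝ}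

theorem memLp_deltaFun_section
    (hmerge : ∀ S, MemLp (fun x => f (merge n S xs x)) (ENNReal.ofReal p) P) (i : Fin n)
    (T : Finset (Fin n)) :
    MemLp (fun x => deltaFun n f i xs (T, x)) (ENNReal.ofReal p) P :=
  (hmerge (insert i T)).sub (hmerge T)

theorem integrable_abs_deltaFun_rpow [SFinite P]
    (hmerge : ∀ S, MemLp (fun x => f (merge n S xs x)) (ENNReal.ofReal p) P) (i : Fin n)
    (hp : 0 < p) (w : Finset (Fin n) → ℝ) (D : Finset (Fin n)) :
    Integrable (fun q => |deltaFun n f i xs q| ^ p) ((subsetMeasure n D w).prod P) :=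
  integrable_finsetSum_dirac_prod _ _ (fun _ _ => ENNReal.ofReal_ne_top)
    fun T _ => (memLp_deltaFun_section hmerge i T).integrable_abs_rpow hp

theorem integral_abs_deltaFun_rpow_le [SFinite P]
    (hmerge : ∀ S, MemLp (fun x => f (merge n S xs x)) (ENNReal.ofReal p) P) (i : Fin n)
    (hp : 0 < p) (w : Finset (Fin n) → ℝ) (hw : ∀ S ∈ (univ.erase i).powerset, 0 ≤ w S) :
    ∫ q, |deltaFun n f i xs q| ^ p ∂((subsetMeasure n (univ.erase i) w).prod P)
      ≤ 2 ^ p * (univ.erase i).powerset.sup' ⟨∅, empty_mem_powerset _⟩ w *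
          ∑ S, ∫ x, |f (merge n S xs x)| ^ p ∂P := by
  set A : Finset (Fin n) → ℝ := fun S => ∫ x, |f (merge n S xs x)| ^ p ∂P
  have hint S : Integrable (fun x => |f (merge n S xs x)| ^ p) P :=
    (hmerge S).integrable_abs_rpow hp
  rw [subsetMeasure, integral_finsetSum_dirac_prod _ _ (fun _ _ => ENNReal.ofReal_ne_top)
    fun T _ => (memLp_deltaFun_section hmerge i T).integrable_abs_rpow hp]
  calc ∑ T ∈ (univ.erase i).powerset,
        (ENNReal.ofReal (w T)).toReal • ∫ x, |deltaFun n f i xs (T, x)| ^ p ∂P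
      ≤ ∑ T ∈ (univ.erase i).powerset, w T * (2 ^ p * (A (insert i T) + A T)) := by
        refine sum_le_sum fun T hT => ?_
        rw [ENNReal.toReal_ofReal (hw T hT), smul_eq_mul]
        exact mul_le_mul_of_nonneg_left
          (integral_abs_sub_rpow_le hp.le (hint (insert i T)) (hint T)) (hw T hT)
    _ ≤ (univ.erase i).powerset.sup' ⟨∅, empty_mem_powerset _⟩ w *
          ∑ T ∈ (univ.erase i).powerset, 2 ^ p * (A (insert i T) + A T) :=
        sum_mul_le_sup'_mul_sum _ _ _ fun T _ => by positivity
    _ = _ := by rw [← mul_sum, sum_powerset_erase_insert_add]; ring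

end DeltaFun

theorem stmt5_general (n : ℕ) (P : Measure (Fin n → ℝ)) [IsProbabilityMeasure P]
    (p : ℝ) (hp : 1 ≤ p) (f : (Fin n → ℝ) → ℝ)
    (hf : MemLp f (ENNReal.ofReal p) (tildeP n P))
    (w : Fin n → Finset (Fin n) → ℝ)
    (hw0 : ∀ i : Fin n, ∀ S ∈ (univ.erase i).powerset, 0 ≤ w i S) :
    ∀ᵐ xs ∂P, ∀ i : Fin n,
      AEMeasurable (deltaFun n f i xs)
        ((subsetMeasure n (univ.erase i) (w i)).prod P) ∧
      Integrable (fun q => |deltaFun n f i xs q| ^ p)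
        ((subsetMeasure n (univ.erase i) (w i)).prod P) ∧
      ∫ q, |deltaFun n f i xs q| ^ p
          ∂((subsetMeasure n (univ.erase i) (w i)).prod P)
        ≤ (2 : ℝ) ^ p *
            ((univ.erase i).powerset.sup' ⟨∅, Finset.empty_mem_powerset _⟩ (w i)) *
            ∑ S : Finset (Fin n), ∫ x, |f (merge n S xs x)| ^ p ∂P := by
  have hp0 : 0 < p := by linarith
  filter_upwards [hf.ae_forall_memLp_merge (by simpa using hp0) ENNReal.ofReal_ne_top]
    with xs hmerge i
  exact ⟨aemeasurable_finsetSum_dirac_prod _ _ fun T =>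
      (memLp_deltaFun_section hmerge i T).1.aemeasurable,
    integrable_abs_deltaFun_rpow hmerge i hp0 (w i) _,
    integral_abs_deltaFun_rpow_le hmerge i hp0 (w i) (hw0 i)⟩

/-- Measurability and `p`-integrability of `Δ_i` w.r.t. `P_i^{(h)} ⊗ P_X`.
Let `f ∈ L^p(P̃_X)` with `p ≥ 1` and let the coefficients `w_i(S,N)` be nonnegative and
sum to one over `S ⊆ N∖{i}`. Then for `P_X`-almost every `x*` and every `i ∈ N`, the map
`(S,x) ↦ Δ_i(S,x; x*,f) = f(x*_{S∪{i}}, x_{-(S∪{i})}) − f(x*_S, x_{-S})` is measurable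
w.r.t. `P_i^{(h)} ⊗ P_X` and `p`-power integrable with
`∫ |Δ_i|^p d(P_i^{(h)} ⊗ P_X) ≤ 2^p · (max_{S⊆N∖{i}} w_i(S,N)) · ν_{x*}^{(p)}(f)`. -/
theorem stmt5 (n : ℕ) (P : Measure (Fin n → ℝ)) [IsProbabilityMeasure P]
    (p : ℝ) (hp : 1 ≤ p) (f : (Fin n → ℝ) → ℝ)
    (hf : MemLp f (ENNReal.ofReal p) (tildeP n P))
    (w : Fin n → Finset (Fin n) → ℝ)
    (hw0 : ∀ i : Fin n, ∀ S ∈ (univ.erase i).powerset, 0 ≤ w i S)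
    (hw1 : ∀ i : Fin n, ∑ S ∈ (univ.erase i).powerset, w i S = 1) :
    ∀ᵐ xs ∂P, ∀ i : Fin n,
      AEMeasurable (deltaFun n f i xs)
        ((subsetMeasure n (univ.erase i) (w i)).prod P) ∧
      Integrable (fun q => |deltaFun n f i xs q| ^ p)
        ((subsetMeasure n (univ.erase i) (w i)).prod P) ∧
      ∫ q, |deltaFun n f i xs q| ^ p
          ∂((subsetMeasure n (univ.erase i) (w i)).prod P)
        ≤ (2 : ℝ) ^ p *
            ((univ.erase i).powerset.sup' ⟨∅, Finset.empty_mem_powerset _⟩ (w i)) *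
            ∑ S : Finset (Fin n), ∫ x, |f (merge n S xs x)| ^ p ∂P :=
  stmt5_general n P p hp f hf w hw0
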